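/- Fix ξ₀ ∈ ℝ, ξ₁ > 0 and y₁ ≠ 0, and let en(y;Δ) = log(1+exp(Δ y₁)) − Δ y₁ exp(Δ y₁)/(1+exp(Δ y₁)) be the two-class posterior entropy. Then the probability of a missing class label q(Δ) = exp(ξ₀ + ξ₁ log en(y;Δ)) / (1 + exp(ξ₀ + ξ₁ log en(y;Δ))) is a strictly decreasing function of Δ on (0,∞). -/

import Mathlib

/-- The posterior entropy as a function of `Δ`, with fixed first coordinate `y1`. -/
noncomputable def entropyObs (y1 Δ : ℝ) : ℝ :=
  Real.log (1 + Real.exp (Δ * y1)) - Δ * y1 * Real.exp (Δ * y1) / (1 + Real.exp (Δ * y1))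

noncomputable def entF (t : ℝ) : ℝ :=
  Real.log (1 + Real.exp t) - t * Real.exp t / (1 + Real.exp t)

lemma entF_denom_pos (t : ℝ) : 0 < 1 + Real.exp t := by positivity

lemma entF_even (t : ℝ) : entF (-t) = entF t := by
  unfold entF
  have he : Real.exp t ≠ 0 := (Real.exp_pos t).ne'
  have h1 : (1 : ℝ) + Real.exp (-t) = (1 + Real.exp t) / Real.exp t := by
    rw [Real.exp_neg]; field_simp; ring
  have h2 : Real.log ((1 + Real.exp t) / Real.exp t)
      = Real.log (1 + Real.exp t) - t := by
    rw [Real.log_div (entF_denom_pos t).ne' he, Real.log_exp]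
  rw [h1, h2, Real.exp_neg]
  have hd : (1 : ℝ) + Real.exp t ≠ 0 := (entF_denom_pos t).ne'
  field_simp
  ring

lemma entF_hasDerivAt (t : ℝ) :
    HasDerivAt entF (-(t * Real.exp t) / (1 + Real.exp t) ^ 2) t := by
  have h1 : HasDerivAt (fun s : ℝ => 1 + Real.exp s) (Real.exp t) t :=
    (Real.hasDerivAt_exp t).const_add 1
  have h2 : HasDerivAt (fun s : ℝ => Real.log (1 + Real.exp s))
      (Real.exp t / (1 + Real.exp t)) t := h1.log (entF_denom_pos t).ne'
  have h3 : HasDerivAt (fun s : ℝ => s * Real.exp s)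
      (1 * Real.exp t + t * Real.exp t) t :=
    (hasDerivAt_id t).mul (Real.hasDerivAt_exp t)
  have h4 := h3.div h1 (entF_denom_pos t).ne'
  have h5 := h2.sub h4
  have h5 : HasDerivAt entF _ t := h5
  convert h5 using 1
  have hd : (1 : ℝ) + Real.exp t ≠ 0 := (entF_denom_pos t).ne'
  field_simp
  ring

lemma entF_strictAntiOn : StrictAntiOn entF (Set.Ici (0 : ℝ)) := by
  apply strictAntiOn_of_deriv_neg (convex_Ici 0)
  · exact fun t _ => (entF_hasDerivAt t).differentiableAt.continuousAt.continuousWithinAt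
  · intro t ht
    rw [interior_Ici] at ht
    rw [(entF_hasDerivAt t).deriv]
    apply div_neg_of_neg_of_pos
    · have : 0 < t * Real.exp t := mul_pos ht (Real.exp_pos t)
      linarith
    · positivity

lemma entF_pos {t : ℝ} (ht : 0 < t) : 0 < entF t := by
  unfold entF
  have h1 : t * Real.exp t / (1 + Real.exp t) < t := by
    rw [div_lt_iff₀ (entF_denom_pos t)]
    nlinarith [Real.exp_pos t]
  have h2 : t < Real.log (1 + Real.exp t) := by
    have := Real.log_lt_log (Real.exp_pos t) (by linarith : Real.exp t < 1 + Real.exp t)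
    rwa [Real.log_exp] at this
  linarith

lemma entropyObs_eq (y1 Δ : ℝ) : entropyObs y1 Δ = entF (Δ * |y1|) := by
  rcases abs_cases y1 with ⟨h, _⟩ | ⟨h, _⟩
  · rw [h]; rfl
  · rw [h]
    have : entropyObs y1 Δ = entF (Δ * y1) := rfl
    rw [this, mul_neg, entF_even]

/-- For `ξ1 > 0` and `y1 ≠ 0`, the missing-label probability
`q(Δ) = exp(ξ0 + ξ1 log en(y;Δ)) / (1 + exp(ξ0 + ξ1 log en(y;Δ)))`
is strictly decreasing in `Δ` on `(0, ∞)`. -/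
theorem missing_prob_strictAntiOn (ξ0 ξ1 y1 : ℝ) (hξ1 : 0 < ξ1) (hy1 : y1 ≠ 0) :
    StrictAntiOn (fun Δ : ℝ =>
        Real.exp (ξ0 + ξ1 * Real.log (entropyObs y1 Δ)) /
          (1 + Real.exp (ξ0 + ξ1 * Real.log (entropyObs y1 Δ))))
      (Set.Ioi (0 : ℝ)) := by
  intro a ha b hb hab
  simp only [Set.mem_Ioi] at ha hb
  have hc : 0 < |y1| := abs_pos.mpr hy1
  have hac : 0 < a * |y1| := mul_pos ha hc
  have hbc : 0 < b * |y1| := mul_pos hb hc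
  have hlt : a * |y1| < b * |y1| := mul_lt_mul_of_pos_right hab hc
  have hf : entF (b * |y1|) < entF (a * |y1|) := entF_strictAntiOn hac.le hbc.le hlt
  have hfb : 0 < entF (b * |y1|) := entF_pos hbc
  have hlog : Real.log (entF (b * |y1|)) < Real.log (entF (a * |y1|)) :=
    Real.log_lt_log hfb hf
  have hkey : ξ0 + ξ1 * Real.log (entropyObs y1 b) < ξ0 + ξ1 * Real.log (entropyObs y1 a) := by
    rw [entropyObs_eq, entropyObs_eq]
    exact add_lt_add_right (mul_lt_mul_of_pos_left hlog hξ1) ξ0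
  have hexp : Real.exp (ξ0 + ξ1 * Real.log (entropyObs y1 b))
      < Real.exp (ξ0 + ξ1 * Real.log (entropyObs y1 a)) := Real.exp_lt_exp.mpr hkey
  set ea := Real.exp (ξ0 + ξ1 * Real.log (entropyObs y1 a)) with hea
  set eb := Real.exp (ξ0 + ξ1 * Real.log (entropyObs y1 b)) with heb
  have hpa : 0 < ea := Real.exp_pos _
  have hpb : 0 < eb := Real.exp_pos _
  show eb / (1 + eb) < ea / (1 + ea)
  rw [div_lt_div_iff₀ (by linarith) (by linarith)]
  nlinarith
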